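/- Under the general EMOT setting with the growth/continuity assumption, if P(ĉ) < +∞ for some ĉ ∈ B_{0:T}, then P(c) ∈ ℝ for every c ∈ B_{0:T}, and the functional P : B_{0:T} → ℝ is norm continuous with respect to ‖·‖_{0:T}, cash additive (P(c + k) = P(c) + k for every constant k ∈ ℝ), concave, and nondecreasing. -/

import Mathlib

open MeasureTheory Filter Topology
open scoped ENNReal BigOperators

noncomputable section

namespace EMOT

/-- The nonnegative part of an extended real number, as an element of `ℝ≥0∞`. -/
def posPart (a : EReal) : ℝ≥0∞ := if a = ⊤ then ⊤ else ENNReal.ofReal a.toReal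

/-- The (possibly infinite) integral of an `EReal`-valued function, defined as the
difference of the lower integrals of its positive and negative parts. -/
def eInt {X : Type} [MeasurableSpace X] (μ : Measure X) (f : X → EReal) : EReal :=
  ((∫⁻ x, posPart (f x) ∂μ : ℝ≥0∞) : EReal) - ((∫⁻ x, posPart (-(f x)) ∂μ : ℝ≥0∞) : EReal)

variable {T d : ℕ}

/-- The path space `Ω = ∏_{t=0}^T ∏_{j=1}^d K_t^j`. -/
abbrev PathSpace (K : Fin (T + 1) → Fin d → Set ℝ) : Type :=
  { x : Fin (T + 1) → Fin d → ℝ // ∀ t j, x t j ∈ K t j }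

variable (K : Fin (T + 1) → Fin d → Set ℝ)

/-- The weight `Σ_{t,j} |x_t^j|`. -/
def wt (x : PathSpace K) : ℝ := ∑ t, ∑ j, |x.1 t j|

/-- The partial weight `Σ_{s ≤ t, j} |x_s^j|`. -/
def wtTo (t : Fin (T + 1)) (x : PathSpace K) : ℝ :=
  ∑ s ∈ Finset.univ.filter (fun s => s ≤ t), ∑ j, |x.1 s j|

/-- Membership in `C_{0:T}`: continuous with linear growth. -/
def memC (φ : PathSpace K → ℝ) : Prop :=
  Continuous φ ∧ ∃ M : ℝ, ∀ x, |φ x| ≤ M * (1 + wt K x)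

/-- Membership in `B_{0:T}`: Borel measurable with linear growth. -/
def memB (φ : PathSpace K → ℝ) : Prop :=
  Measurable φ ∧ ∃ M : ℝ, ∀ x, |φ x| ≤ M * (1 + wt K x)

/-- Membership in `C_{0:t}`: continuous, growth controlled by the partial weight,
and depending only on the coordinates up to time `t`. -/
def memCto (t : Fin (T + 1)) (φ : PathSpace K → ℝ) : Prop :=
  Continuous φ ∧ (∃ M : ℝ, ∀ x, |φ x| ≤ M * (1 + wtTo K t x)) ∧
    ∀ x y : PathSpace K, (∀ s, s ≤ t → x.1 s = y.1 s) → φ x = φ y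

/-- The weighted sup-norm `‖φ‖_{0:T}`. -/
def wnorm (φ : PathSpace K → ℝ) : ℝ :=
  ⨆ x : PathSpace K, |φ x| / (1 + wt K x)

/-- The standing hypotheses of the general EMOT setting: closed nonempty factor sets,
vector subspaces `ℝ ⊆ E_t ⊆ C_{0:t}`, a proper concave functional `U` with `U(0) ∈ ℝ`,
and a convex cone `A ⊆ C_{0:T}` with `0 ∈ A`. -/
structure IsSetting
    (E : Fin (T + 1) → Set (PathSpace K → ℝ))
    (U : (Fin (T + 1) → PathSpace K → ℝ) → EReal)
    (A : Set (PathSpace K → ℝ)) : Prop where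
  K_nonempty : ∀ t j, (K t j).Nonempty
  K_closed : ∀ t j, IsClosed (K t j)
  E_subset : ∀ t, ∀ φ ∈ E t, memCto K t φ
  E_const : ∀ t (r : ℝ), (fun _ => r) ∈ E t
  E_add : ∀ t, ∀ φ ∈ E t, ∀ ψ ∈ E t, φ + ψ ∈ E t
  E_smul : ∀ t (r : ℝ), ∀ φ ∈ E t, r • φ ∈ E t
  U_ne_top : ∀ φ, (∀ t, φ t ∈ E t) → U φ ≠ ⊤
  U_zero_real : U (fun _ _ => 0) ≠ ⊥
  U_concave : ∀ φ ψ, (∀ t, φ t ∈ E t) → (∀ t, ψ t ∈ E t) → ∀ a : ℝ, 0 ≤ a → a ≤ 1 →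
    (a : EReal) * U φ + ((1 - a : ℝ) : EReal) * U ψ ≤
      U (fun t => a • φ t + (1 - a) • ψ t)
  A_subset : ∀ z ∈ A, memC K z
  A_zero : (fun _ => (0 : ℝ)) ∈ A
  A_add : ∀ z₁ ∈ A, ∀ z₂ ∈ A, z₁ + z₂ ∈ A
  A_smul : ∀ c : ℝ, 0 < c → ∀ z ∈ A, c • z ∈ A

/-- Membership in `E = E_0 × … × E_T`. -/
def memE (E : Fin (T + 1) → Set (PathSpace K → ℝ))
    (φ : Fin (T + 1) → PathSpace K → ℝ) : Prop := ∀ t, φ t ∈ E t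

/-- The generalized optimized certainty equivalent `S^U`. -/
def SU (U : (Fin (T + 1) → PathSpace K → ℝ) → EReal)
    (φ : Fin (T + 1) → PathSpace K → ℝ) : EReal :=
  ⨆ β : Fin (T + 1) → ℝ, (U (fun t x => φ t x + β t) - ((∑ t, β t : ℝ) : EReal))

/-- The set `Φ_z(c)` of subhedging static parts. -/
def Phi (E : Fin (T + 1) → Set (PathSpace K → ℝ))
    (U : (Fin (T + 1) → PathSpace K → ℝ) → EReal)
    (z : PathSpace K → ℝ) (c : PathSpace K → EReal) :
    Set (Fin (T + 1) → PathSpace K → ℝ) :=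
  { φ | memE K E φ ∧ SU K U φ ≠ ⊥ ∧
      ∀ x, (((∑ t, φ t x) + z x : ℝ) : EReal) ≤ c x }

/-- The primal (nonlinear subhedging) value `P(c)`, with the convention `sup ∅ = -∞`. -/
def P (E : Fin (T + 1) → Set (PathSpace K → ℝ))
    (U : (Fin (T + 1) → PathSpace K → ℝ) → EReal)
    (A : Set (PathSpace K → ℝ)) (c : PathSpace K → EReal) : EReal :=
  ⨆ (z : PathSpace K → ℝ) (_ : -z ∈ A) (φ ∈ Phi K E U z c), SU K U φ

/-- `P` evaluated on a real-valued payoff. -/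
def PB (E : Fin (T + 1) → Set (PathSpace K → ℝ))
    (U : (Fin (T + 1) → PathSpace K → ℝ) → EReal)
    (A : Set (PathSpace K → ℝ)) (c : PathSpace K → ℝ) : EReal :=
  P K E U A (fun x => ((c x : ℝ) : EReal))

/-- The penalization `D(Q)`, convex conjugate of `U`. -/
def D (E : Fin (T + 1) → Set (PathSpace K → ℝ))
    (U : (Fin (T + 1) → PathSpace K → ℝ) → EReal)
    (Q : Measure (PathSpace K)) : EReal :=
  ⨆ (φ : Fin (T + 1) → PathSpace K → ℝ) (_ : memE K E φ),
    (U φ - ((∑ t, ∫ x, φ t x ∂Q : ℝ) : EReal))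

/-- `Q ∈ Prob¹(Ω)`: a Borel probability measure integrating all coordinates. -/
def Prob1 (Q : Measure (PathSpace K)) : Prop :=
  IsProbabilityMeasure Q ∧ ∀ t j, Integrable (fun x : PathSpace K => x.1 t j) Q

/-- `Q ∈ A°`. -/
def inPolar (A : Set (PathSpace K → ℝ)) (Q : Measure (PathSpace K)) : Prop :=
  ∀ z ∈ A, ∫ x, z x ∂Q ≤ 0

/-- `σ_A(Q) = sup_{z ∈ A} ∫ z dQ`. -/
def sigmaA (A : Set (PathSpace K → ℝ)) (Q : Measure (PathSpace K)) : EReal :=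
  ⨆ (z : PathSpace K → ℝ) (_ : z ∈ A), ((∫ x, z x ∂Q : ℝ) : EReal)

/-- The growth/continuity assumption: there are compact sets `𝔎_t(n)` and nonnegative
functions `f_t^n ∈ E_t` dominating the weight off the compacts, with
`V(Γ f^n) = -U(-Γ f^n) → 0`. -/
def Growth (E : Fin (T + 1) → Set (PathSpace K → ℝ))
    (U : (Fin (T + 1) → PathSpace K → ℝ) → EReal) : Prop :=
  ∃ (𝒦 : ℕ → Fin (T + 1) → Set (Fin d → ℝ)) (f : ℕ → Fin (T + 1) → PathSpace K → ℝ),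
    (∀ n t, IsCompact (𝒦 n t)) ∧
    (∀ n t, f n t ∈ E t) ∧
    (∀ n t x, 0 ≤ f n t x) ∧
    (∀ n (x : PathSpace K), (¬ ∀ t, (fun j => x.1 t j) ∈ 𝒦 n t) →
      1 + wt K x ≤ ∑ t, f n t x) ∧
    (∀ Γ : ℝ, 0 < Γ →
      Tendsto (fun n => - U (fun t x => -(Γ * f n t x))) atTop (nhds (0 : EReal)))

/-- Admissible dynamic trading strategies `H^d`. -/
def Adapted (Δ : Fin T → PathSpace K → Fin d → ℝ) : Prop :=
  ∀ t : Fin T, (∀ j, Continuous (fun x => Δ t x j)) ∧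
    (∃ M : ℝ, ∀ x j, |Δ t x j| ≤ M) ∧
    (∀ x y : PathSpace K, (∀ s : Fin (T + 1), s ≤ t.castSucc → x.1 s = y.1 s) →
      Δ t x = Δ t y)

/-- The elementary stochastic integral `I^Δ`. -/
def stochInt (Δ : Fin T → PathSpace K → Fin d → ℝ) (x : PathSpace K) : ℝ :=
  ∑ t : Fin T, ∑ j, Δ t x j * (x.1 t.succ j - x.1 t.castSucc j)

/-- Martingale measures: `Q ∈ Prob¹(Ω)` with `E_Q[I^Δ] = 0` for all `Δ ∈ H^d`. -/
def Mart (Q : Measure (PathSpace K)) : Prop :=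
  Prob1 K Q ∧ ∀ Δ, Adapted K Δ → ∫ x, stochInt K Δ x ∂Q = 0

/-- The set of static parts of semistatic subhedging strategies for `c`. -/
def Ssub (E : Fin (T + 1) → Set (PathSpace K → ℝ))
    (U : (Fin (T + 1) → PathSpace K → ℝ) → EReal)
    (c : PathSpace K → EReal) : Set (Fin (T + 1) → PathSpace K → ℝ) :=
  { φ | memE K E φ ∧ SU K U φ ≠ ⊥ ∧
      ∃ Δ, Adapted K Δ ∧ ∀ x, (((∑ t, φ t x) + stochInt K Δ x : ℝ) : EReal) ≤ c x }

/-- Linearity and norm-continuity of a functional on `C_{0:T}`. -/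
def IsLinC (lam : (PathSpace K → ℝ) → ℝ) : Prop :=
  (∀ φ ψ, memC K φ → memC K ψ → lam (φ + ψ) = lam φ + lam ψ) ∧
  (∀ (r : ℝ) (φ : PathSpace K → ℝ), memC K φ → lam (r • φ) = r * lam φ) ∧
  (∃ M : ℝ, ∀ φ, memC K φ → |lam φ| ≤ M * wnorm K φ)

/-- Positivity of a functional on `C_{0:T}`. -/
def IsPos (lam : (PathSpace K → ℝ) → ℝ) : Prop :=
  ∀ φ, memC K φ → (∀ x, 0 ≤ φ x) → 0 ≤ lam φ

/-- The convex conjugate `P*` of the primal functional `P`, on the dual of `C_{0:T}`. -/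
def Pstar (E : Fin (T + 1) → Set (PathSpace K → ℝ))
    (U : (Fin (T + 1) → PathSpace K → ℝ) → EReal)
    (A : Set (PathSpace K → ℝ)) (lam : (PathSpace K → ℝ) → ℝ) : EReal :=
  ⨆ (c : PathSpace K → ℝ) (_ : memC K c), (PB K E U A c - ((lam c : ℝ) : EReal))

/-- The conjugate `(S^U)*(λ_0,…,λ_T)`, where `λ_t` is the restriction of `λ` to `C_{0:t}`. -/
def SUstar (E : Fin (T + 1) → Set (PathSpace K → ℝ))
    (U : (Fin (T + 1) → PathSpace K → ℝ) → EReal)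
    (lam : (PathSpace K → ℝ) → ℝ) : EReal :=
  ⨆ (φ : Fin (T + 1) → PathSpace K → ℝ) (_ : memE K E φ),
    (SU K U φ - ((∑ t, lam (φ t) : ℝ) : EReal))

/-- The penalization `D(λ_0,…,λ_T)` on dual elements. -/
def Dlam (E : Fin (T + 1) → Set (PathSpace K → ℝ))
    (U : (Fin (T + 1) → PathSpace K → ℝ) → EReal)
    (lam : (PathSpace K → ℝ) → ℝ) : EReal :=
  ⨆ (φ : Fin (T + 1) → PathSpace K → ℝ) (_ : memE K E φ),
    (U φ - ((∑ t, lam (φ t) : ℝ) : EReal))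

/-- The support function `σ_A(λ) = sup_{z ∈ A} λ(z)`. -/
def sigmaAlam (A : Set (PathSpace K → ℝ)) (lam : (PathSpace K → ℝ) → ℝ) : EReal :=
  ⨆ (z : PathSpace K → ℝ) (_ : z ∈ A), ((lam z : ℝ) : EReal)

/-- The weak topology `σ((C_{0:T})*, C_{0:T})` restricted to measures: the topology
generated by the evaluation maps `Q ↦ ∫ φ dQ`, `φ ∈ C_{0:T}`. -/
def weakTop : TopologicalSpace (Measure (PathSpace K)) :=
  TopologicalSpace.induced
    (fun Q => fun φ : {φ : PathSpace K → ℝ // memC K φ} => ∫ x, φ.1 x ∂Q)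
    inferInstance
section AuxEReal

lemma aux_iSup_add_const {ι : Sort*} (f : ι → EReal) (c : ℝ) :
    (⨆ i, f i) + (c : EReal) = ⨆ i, (f i + (c : EReal)) := by
  refine le_antisymm ?_ (iSup_le fun i => add_le_add (le_iSup f i) le_rfl)
  refine (EReal.le_sub_iff_add_le (Or.inl (EReal.coe_ne_bot c))
    (Or.inl (EReal.coe_ne_top c))).1 (iSup_le fun i => ?_)
  exact (EReal.le_sub_iff_add_le (Or.inl (EReal.coe_ne_bot c))
    (Or.inl (EReal.coe_ne_top c))).2 (le_iSup (fun i => f i + (c : EReal)) i)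

lemma aux_iSup_add_iSup_le {ι κ : Sort*} {f : ι → EReal} {g : κ → EReal} {m : EReal}
    (h : ∀ i j, f i + g j ≤ m) : (⨆ i, f i) + (⨆ j, g j) ≤ m := by
  refine EReal.add_le_of_forall_lt fun a ha b hb => ?_
  obtain ⟨i, hi⟩ := lt_iSup_iff.1 ha
  obtain ⟨j, hj⟩ := lt_iSup_iff.1 hb
  exact le_trans (add_le_add hi.le hj.le) (h i j)

lemma aux_mul_iSup {ι : Sort*} {r : ℝ} (hr : 0 < r) (f : ι → EReal) :
    (r : EReal) * ⨆ i, f i = ⨆ i, (r : EReal) * f i := by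
  have h0 : (0 : EReal) ≤ (r : EReal) := by exact_mod_cast hr.le
  have h0' : (0 : EReal) ≤ ((r⁻¹ : ℝ) : EReal) := by exact_mod_cast (inv_nonneg.2 hr.le)
  refine le_antisymm ?_ (iSup_le fun i => mul_le_mul_of_nonneg_left (le_iSup f i) h0)
  have h1 : (⨆ i, f i) ≤ ((r⁻¹ : ℝ) : EReal) * ⨆ i, (r : EReal) * f i := by
    refine iSup_le fun i => ?_
    calc f i = ((r⁻¹ : ℝ) : EReal) * ((r : EReal) * f i) := by
            rw [← mul_assoc, ← EReal.coe_mul, inv_mul_cancel₀ hr.ne', EReal.coe_one, one_mul]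
      _ ≤ _ := mul_le_mul_of_nonneg_left (le_iSup (fun i => (r : EReal) * f i) i) h0'
  calc (r : EReal) * ⨆ i, f i
      ≤ (r : EReal) * (((r⁻¹ : ℝ) : EReal) * ⨆ i, (r : EReal) * f i) :=
        mul_le_mul_of_nonneg_left h1 h0
    _ = ⨆ i, (r : EReal) * f i := by
        rw [← mul_assoc, ← EReal.coe_mul, mul_inv_cancel₀ hr.ne', EReal.coe_one, one_mul]

lemma aux_mul_sub (a s : ℝ) (ha : 0 < a) (X : EReal) :
    (a : EReal) * (X - (s : EReal)) = (a : EReal) * X - ((a * s : ℝ) : EReal) := by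
  induction X with
  | bot =>
      rw [sub_eq_add_neg, sub_eq_add_neg, ← EReal.coe_neg, ← EReal.coe_neg, EReal.bot_add,
        EReal.coe_mul_bot_of_pos ha, EReal.bot_add]
  | coe x =>
      rw [show (x : EReal) - (s : EReal) = ((x - s : ℝ) : EReal) by exact_mod_cast rfl]
      rw [← EReal.coe_mul, ← EReal.coe_mul,
        show ((a * (x - s) : ℝ) : EReal) = ((a * x - a * s : ℝ) : EReal) by ring_nf]
      exact_mod_cast rfl
  | top =>
      rw [sub_eq_add_neg, sub_eq_add_neg, ← EReal.coe_neg, ← EReal.coe_neg, EReal.top_add_coe,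
        EReal.coe_mul_top_of_pos ha, EReal.top_add_coe]

lemma aux_sub_add_sub (A B : EReal) (c d : ℝ) :
    (A - (c : EReal)) + (B - (d : EReal)) = (A + B) - ((c + d : ℝ) : EReal) := by
  rw [sub_eq_add_neg, sub_eq_add_neg, sub_eq_add_neg, add_add_add_comm]
  congr 1
  rw [← EReal.coe_neg, ← EReal.coe_neg, ← EReal.coe_neg, ← EReal.coe_add]
  norm_cast
  ring

lemma aux_sub_coe_add (Y : EReal) (u v : ℝ) :
    Y - ((u + v : ℝ) : EReal) + (u : EReal) = Y - (v : EReal) := by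
  rw [sub_eq_add_neg, sub_eq_add_neg, ← EReal.coe_neg, ← EReal.coe_neg, add_assoc,
    ← EReal.coe_add]
  norm_num

lemma aux_add_coe_ne_bot {X : EReal} (hX : X ≠ ⊥) (c : ℝ) : X + (c : EReal) ≠ ⊥ := by
  rw [Ne, EReal.add_eq_bot_iff]; push_neg; exact ⟨hX, EReal.coe_ne_bot c⟩

lemma aux_sub_coe_ne_bot {X : EReal} (hX : X ≠ ⊥) (c : ℝ) : X - (c : EReal) ≠ ⊥ := by
  rw [sub_eq_add_neg, ← EReal.coe_neg]; exact aux_add_coe_ne_bot hX _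

lemma aux_mul_ne_bot {a : ℝ} (ha : 0 < a) {X : EReal} (hX : X ≠ ⊥) : (a : EReal) * X ≠ ⊥ := by
  induction X with
  | bot => exact absurd rfl hX
  | coe x => rw [← EReal.coe_mul]; exact EReal.coe_ne_bot _
  | top => rw [EReal.coe_mul_top_of_pos ha]; simp

lemma aux_add_cancel_coe (X Y : EReal) (k : ℝ) (h : X + ((-k : ℝ) : EReal) ≤ Y) :
    X ≤ Y + (k : EReal) := by
  have := add_le_add h (le_refl (k : EReal))
  rwa [add_assoc, ← EReal.coe_add, neg_add_cancel, EReal.coe_zero, add_zero] at this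

lemma aux_concave_real {X Y Z : EReal} {a : ℝ}
    (hX : X ≠ ⊥) (hX' : X ≠ ⊤) (hY : Y ≠ ⊥) (hY' : Y ≠ ⊤) (hZ : Z ≠ ⊥) (hZ' : Z ≠ ⊤)
    (h : (a : EReal) * X + ((1 - a : ℝ) : EReal) * Y ≤ Z) :
    a * X.toReal + (1 - a) * Y.toReal ≤ Z.toReal := by
  lift X to ℝ using ⟨hX', hX⟩
  lift Y to ℝ using ⟨hY', hY⟩
  lift Z to ℝ using ⟨hZ', hZ⟩
  rw [← EReal.coe_mul, ← EReal.coe_mul, ← EReal.coe_add] at h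
  simpa using EReal.coe_le_coe_iff.1 h

end AuxEReal

section AuxEMOT

variable {K}

lemma aux_wt_nonneg (x : PathSpace K) : 0 ≤ wt K x :=
  Finset.sum_nonneg fun _ _ => Finset.sum_nonneg fun _ _ => abs_nonneg _

lemma aux_one_add_wt_pos (x : PathSpace K) : (0:ℝ) < 1 + wt K x := by
  have := aux_wt_nonneg x; linarith

lemma aux_wt_measurable : Measurable (wt K) := by
  show Measurable fun x : PathSpace K => ∑ t, ∑ j, |x.1 t j|
  refine Finset.measurable_sum _ fun t _ => Finset.measurable_sum _ fun j _ => ?_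
  exact ((measurable_pi_apply j).comp ((measurable_pi_apply t).comp measurable_subtype_coe)).abs

lemma aux_memB_congr {c₁ c₂ : PathSpace K → ℝ} (h : ∀ x, c₁ x = c₂ x) (h₁ : memB K c₁) :
    memB K c₂ := by rwa [show c₂ = c₁ from funext fun x => (h x).symm]

lemma aux_memB_comb {c₁ c₂ : PathSpace K → ℝ} (h₁ : memB K c₁) (h₂ : memB K c₂) (a b r : ℝ) :
    memB K (fun x => a * c₁ x + b * c₂ x + r * (1 + wt K x)) := by
  obtain ⟨m₁, M₁, hM₁⟩ := h₁
  obtain ⟨m₂, M₂, hM₂⟩ := h₂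
  constructor
  · exact ((m₁.const_mul a).add (m₂.const_mul b)).add
      ((measurable_const.add aux_wt_measurable).const_mul r)
  · refine ⟨|a| * |M₁| + |b| * |M₂| + |r|, fun x => ?_⟩
    have hw := aux_one_add_wt_pos x
    have e₁ : |c₁ x| ≤ |M₁| * (1 + wt K x) :=
      (hM₁ x).trans (mul_le_mul_of_nonneg_right (le_abs_self M₁) hw.le)
    have e₂ : |c₂ x| ≤ |M₂| * (1 + wt K x) :=
      (hM₂ x).trans (mul_le_mul_of_nonneg_right (le_abs_self M₂) hw.le)
    calc |a * c₁ x + b * c₂ x + r * (1 + wt K x)|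
        ≤ |a * c₁ x| + |b * c₂ x| + |r * (1 + wt K x)| := abs_add_three _ _ _
      _ = |a| * |c₁ x| + |b| * |c₂ x| + |r| * (1 + wt K x) := by
          rw [abs_mul, abs_mul, abs_mul, abs_of_pos hw]
      _ ≤ |a| * (|M₁| * (1 + wt K x)) + |b| * (|M₂| * (1 + wt K x)) + |r| * (1 + wt K x) := by
          gcongr
      _ = (|a| * |M₁| + |b| * |M₂| + |r|) * (1 + wt K x) := by ring

lemma aux_abs_le_of_wnorm_lt {c : PathSpace K → ℝ} (h : memB K c)
    {δ : ℝ} (hδ : wnorm K c < δ) (x : PathSpace K) : |c x| ≤ δ * (1 + wt K x) := by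
  obtain ⟨-, M, hM⟩ := h
  have hb : BddAbove (Set.range fun y : PathSpace K => |c y| / (1 + wt K y)) := by
    refine ⟨|M|, ?_⟩
    rintro v ⟨y, rfl⟩
    have hw := aux_one_add_wt_pos y
    rw [div_le_iff₀ hw]
    exact (hM y).trans (mul_le_mul_of_nonneg_right (le_abs_self M) hw.le)
  have h1 : |c x| / (1 + wt K x) ≤ wnorm K c := by
    rw [wnorm]; exact le_ciSup hb x
  have hw := aux_one_add_wt_pos x
  have h2 : |c x| / (1 + wt K x) ≤ δ := h1.trans hδ.le
  calc |c x| = |c x| / (1 + wt K x) * (1 + wt K x) := by field_simp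
    _ ≤ δ * (1 + wt K x) := mul_le_mul_of_nonneg_right h2 hw.le

end AuxEMOT
section AuxP

variable {K}

lemma aux_le_P (E : Fin (T + 1) → Set (PathSpace K → ℝ))
    (U : (Fin (T + 1) → PathSpace K → ℝ) → EReal) (A : Set (PathSpace K → ℝ))
    {c : PathSpace K → EReal} {z : PathSpace K → ℝ} {φ : Fin (T + 1) → PathSpace K → ℝ}
    (hz : -z ∈ A) (hφ : φ ∈ Phi K E U z c) : SU K U φ ≤ P K E U A c := by
  unfold P
  exact le_iSup_of_le z (le_iSup_of_le hz (le_iSup_of_le φ (le_iSup_of_le hφ le_rfl)))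

lemma aux_P_le (E : Fin (T + 1) → Set (PathSpace K → ℝ))
    (U : (Fin (T + 1) → PathSpace K → ℝ) → EReal) (A : Set (PathSpace K → ℝ))
    {c : PathSpace K → EReal} {m : EReal}
    (h : ∀ z, -z ∈ A → ∀ φ ∈ Phi K E U z c, SU K U φ ≤ m) : P K E U A c ≤ m := by
  unfold P
  exact iSup_le fun z => iSup_le fun hz => iSup_le fun φ => iSup_le fun hφ => h z hz φ hφ

lemma aux_P_eq (E : Fin (T + 1) → Set (PathSpace K → ℝ))
    (U : (Fin (T + 1) → PathSpace K → ℝ) → EReal) (A : Set (PathSpace K → ℝ))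
    (c : PathSpace K → EReal) :
    P K E U A c = ⨆ p : {p : (PathSpace K → ℝ) × (Fin (T + 1) → PathSpace K → ℝ) //
        -p.1 ∈ A ∧ p.2 ∈ Phi K E U p.1 c}, SU K U p.1.2 := by
  refine le_antisymm (aux_P_le E U A fun z hz φ hφ => ?_) (iSup_le fun p => aux_le_P E U A p.2.1 p.2.2)
  exact le_iSup_of_le ⟨(z, φ), hz, hφ⟩ le_rfl

lemma aux_P_mono (E : Fin (T + 1) → Set (PathSpace K → ℝ))
    (U : (Fin (T + 1) → PathSpace K → ℝ) → EReal) (A : Set (PathSpace K → ℝ))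
    {c₁ c₂ : PathSpace K → EReal} (h : ∀ x, c₁ x ≤ c₂ x) :
    P K E U A c₁ ≤ P K E U A c₂ :=
  aux_P_le E U A fun z hz φ hφ =>
    aux_le_P E U A hz ⟨hφ.1, hφ.2.1, fun x => (hφ.2.2 x).trans (h x)⟩

lemma aux_PB_mono (E : Fin (T + 1) → Set (PathSpace K → ℝ))
    (U : (Fin (T + 1) → PathSpace K → ℝ) → EReal) (A : Set (PathSpace K → ℝ))
    {c₁ c₂ : PathSpace K → ℝ} (h : ∀ x, c₁ x ≤ c₂ x) :
    PB K E U A c₁ ≤ PB K E U A c₂ :=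
  aux_P_mono E U A fun x => EReal.coe_le_coe_iff.2 (h x)

lemma aux_PB_congr {E : Fin (T + 1) → Set (PathSpace K → ℝ)}
    {U : (Fin (T + 1) → PathSpace K → ℝ) → EReal} {A : Set (PathSpace K → ℝ)}
    {c₁ c₂ : PathSpace K → ℝ} (h : ∀ x, c₁ x = c₂ x) :
    PB K E U A c₁ = PB K E U A c₂ := by
  rw [show c₁ = c₂ from funext h]

lemma aux_SU_shift (U : (Fin (T + 1) → PathSpace K → ℝ) → EReal)
    (φ : Fin (T + 1) → PathSpace K → ℝ) (κ : Fin (T + 1) → ℝ) :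
    SU K U (fun t x => φ t x + κ t) = SU K U φ + ((∑ t, κ t : ℝ) : EReal) := by
  unfold SU
  rw [aux_iSup_add_const]
  rw [← (Equiv.addLeft κ).surjective.iSup_comp
    (g := fun γ : Fin (T + 1) → ℝ =>
      U (fun t x => φ t x + γ t) - ((∑ t, γ t : ℝ) : EReal) + ((∑ t, κ t : ℝ) : EReal))]
  refine iSup_congr fun β => ?_
  have h1 : (fun t x => φ t x + κ t + β t) = fun t x => φ t x + (Equiv.addLeft κ β) t := by
    funext t x
    simp only [Equiv.coe_addLeft, Pi.add_apply]
    ring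
  rw [h1]
  have h2 : (∑ t, (Equiv.addLeft κ β) t : ℝ) = (∑ t, κ t) + ∑ t, β t := by
    simp [Equiv.coe_addLeft, Pi.add_apply, Finset.sum_add_distrib]
  rw [h2, aux_sub_coe_add]

lemma aux_SU_concave {E : Fin (T + 1) → Set (PathSpace K → ℝ)}
    {U : (Fin (T + 1) → PathSpace K → ℝ) → EReal} {A : Set (PathSpace K → ℝ)}
    (hS : IsSetting K E U A)
    {φ ψ : Fin (T + 1) → PathSpace K → ℝ} (hφ : memE K E φ) (hψ : memE K E ψ)
    {a : ℝ} (ha0 : 0 < a) (ha1 : a < 1) :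
    (a : EReal) * SU K U φ + ((1 - a : ℝ) : EReal) * SU K U ψ ≤
      SU K U (fun t => a • φ t + (1 - a) • ψ t) := by
  have ha1' : (0:ℝ) < 1 - a := by linarith
  unfold SU
  rw [aux_mul_iSup ha0, aux_mul_iSup ha1']
  refine aux_iSup_add_iSup_le fun β₁ β₂ => ?_
  rw [aux_mul_sub a _ ha0, aux_mul_sub (1 - a) _ ha1', aux_sub_add_sub]
  refine le_trans ?_ (le_iSup _ (fun t => a * β₁ t + (1 - a) * β₂ t))
  have hmem1 : ∀ t, (fun x => φ t x + β₁ t) ∈ E t := fun t =>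
    hS.E_add t (φ t) (hφ t) (fun _ => β₁ t) (hS.E_const t (β₁ t))
  have hmem2 : ∀ t, (fun x => ψ t x + β₂ t) ∈ E t := fun t =>
    hS.E_add t (ψ t) (hψ t) (fun _ => β₂ t) (hS.E_const t (β₂ t))
  have hU := hS.U_concave (fun t x => φ t x + β₁ t) (fun t x => ψ t x + β₂ t)
    hmem1 hmem2 a ha0.le (by linarith)
  have harg : (fun t => a • (fun t x => φ t x + β₁ t) t + (1 - a) • (fun t x => ψ t x + β₂ t) t)
      = fun t x => (a • φ t + (1 - a) • ψ t) x + (a * β₁ t + (1 - a) * β₂ t) := by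
    funext t x
    simp only [Pi.add_apply, Pi.smul_apply, smul_eq_mul]
    ring
  rw [harg] at hU
  have hsum : (∑ t, (a * β₁ t + (1 - a) * β₂ t) : ℝ)
      = a * ∑ t, β₁ t + (1 - a) * ∑ t, β₂ t := by
    rw [Finset.sum_add_distrib, ← Finset.mul_sum, ← Finset.mul_sum]
  rw [hsum, sub_eq_add_neg, sub_eq_add_neg]
  exact add_le_add hU le_rfl

end AuxP
section AuxPB

variable {K}
variable {E : Fin (T + 1) → Set (PathSpace K → ℝ)}
variable {U : (Fin (T + 1) → PathSpace K → ℝ) → EReal} {A : Set (PathSpace K → ℝ)}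

lemma aux_PB_concave (hS : IsSetting K E U A) (c₁ c₂ : PathSpace K → ℝ)
    {a : ℝ} (ha0 : 0 < a) (ha1 : a < 1) :
    (a : EReal) * PB K E U A c₁ + ((1 - a : ℝ) : EReal) * PB K E U A c₂ ≤
      PB K E U A (fun x => a * c₁ x + (1 - a) * c₂ x) := by
  have ha1' : (0:ℝ) < 1 - a := by linarith
  unfold PB
  rw [aux_P_eq E U A (fun x => ((c₁ x : ℝ) : EReal)),
    aux_P_eq E U A (fun x => ((c₂ x : ℝ) : EReal)),
    aux_mul_iSup ha0, aux_mul_iSup ha1']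
  refine aux_iSup_add_iSup_le ?_
  rintro ⟨⟨z₁, φ⟩, hz₁, hφ⟩ ⟨⟨z₂, ψ⟩, hz₂, hψ⟩
  have hSU := aux_SU_concave hS hφ.1 hψ.1 ha0 ha1
  refine hSU.trans (aux_le_P E U A (z := fun x => a * z₁ x + (1 - a) * z₂ x) ?_ ?_)
  · have hz : -(fun x : PathSpace K => a * z₁ x + (1 - a) * z₂ x)
        = a • (-z₁) + (1 - a) • (-z₂) := by
      funext x
      simp only [Pi.add_apply, Pi.smul_apply, Pi.neg_apply, smul_eq_mul]
      ring
    rw [hz]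
    exact hS.A_add _ (hS.A_smul a ha0 _ hz₁) _ (hS.A_smul (1 - a) ha1' _ hz₂)
  · refine ⟨fun t => hS.E_add t _ (hS.E_smul t a _ (hφ.1 t)) _ (hS.E_smul t (1 - a) _ (hψ.1 t)),
      ?_, ?_⟩
    · intro hbot
      have hne : (a : EReal) * SU K U φ + ((1 - a : ℝ) : EReal) * SU K U ψ ≠ ⊥ := by
        rw [Ne, EReal.add_eq_bot_iff]
        push_neg
        exact ⟨aux_mul_ne_bot ha0 hφ.2.1, aux_mul_ne_bot ha1' hψ.2.1⟩
      rw [hbot] at hSU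
      exact hne (le_bot_iff.1 hSU)
    · intro x
      have h1 : (∑ t, φ t x) + z₁ x ≤ c₁ x := EReal.coe_le_coe_iff.1 (hφ.2.2 x)
      have h2 : (∑ t, ψ t x) + z₂ x ≤ c₂ x := EReal.coe_le_coe_iff.1 (hψ.2.2 x)
      refine EReal.coe_le_coe_iff.2 ?_
      have hsum : (∑ t, (a • φ t + (1 - a) • ψ t) x : ℝ)
          = a * ∑ t, φ t x + (1 - a) * ∑ t, ψ t x := by
        simp only [Pi.add_apply, Pi.smul_apply, smul_eq_mul]
        rw [Finset.sum_add_distrib, ← Finset.mul_sum, ← Finset.mul_sum]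
      rw [hsum]
      show a * (∑ t, φ t x) + (1 - a) * (∑ t, ψ t x) + (a * z₁ x + (1 - a) * z₂ x)
        ≤ a * c₁ x + (1 - a) * c₂ x
      have e1 := mul_le_mul_of_nonneg_left h1 ha0.le
      have e2 := mul_le_mul_of_nonneg_left h2 ha1'.le
      nlinarith [e1, e2]

lemma aux_PB_add_const_le (hS : IsSetting K E U A) (c : PathSpace K → ℝ) (k : ℝ) :
    PB K E U A c + (k : EReal) ≤ PB K E U A (fun x => c x + k) := by
  unfold PB
  rw [aux_P_eq E U A (fun x => ((c x : ℝ) : EReal)), aux_iSup_add_const]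
  refine iSup_le ?_
  rintro ⟨⟨z, φ⟩, hz, hφ⟩
  have hT1 : ((T : ℝ) + 1) ≠ 0 := by positivity
  have hκ : (∑ _t : Fin (T + 1), (k / (T + 1) : ℝ)) = k := by
    simp only [Finset.sum_const, Finset.card_univ, Fintype.card_fin, nsmul_eq_mul]
    push_cast
    field_simp
  have hshift := aux_SU_shift U φ (fun _ => k / (T + 1))
  rw [hκ] at hshift
  rw [← hshift]
  refine aux_le_P E U A hz ?_
  refine ⟨fun t => hS.E_add t (φ t) (hφ.1 t) _ (hS.E_const t (k / (T + 1))), ?_, ?_⟩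
  · rw [hshift]
    exact aux_add_coe_ne_bot hφ.2.1 k
  · intro x
    have h1 : (∑ t, φ t x) + z x ≤ c x := EReal.coe_le_coe_iff.1 (hφ.2.2 x)
    refine EReal.coe_le_coe_iff.2 ?_
    have hsum : (∑ t, (φ t x + k / (T + 1)) : ℝ) = (∑ t, φ t x) + k := by
      rw [Finset.sum_add_distrib, hκ]
    rw [hsum]
    show (∑ t, φ t x) + k + z x ≤ c x + k
    linarith

lemma aux_PB_cash (hS : IsSetting K E U A) (c : PathSpace K → ℝ) (k : ℝ) :
    PB K E U A (fun x => c x + k) = PB K E U A c + (k : EReal) := by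
  refine le_antisymm ?_ (aux_PB_add_const_le hS c k)
  have h2 := aux_PB_add_const_le hS (fun x => c x + k) (-k)
  have h3 : PB K E U A (fun x => (c x + k) + -k) = PB K E U A c :=
    aux_PB_congr fun x => by ring
  rw [h3] at h2
  exact aux_add_cancel_coe _ _ k h2

end AuxPB
section AuxFin

variable {K}
variable {E : Fin (T + 1) → Set (PathSpace K → ℝ)}
variable {U : (Fin (T + 1) → PathSpace K → ℝ) → EReal} {A : Set (PathSpace K → ℝ)}

lemma aux_PB_ne_bot (hS : IsSetting K E U A) (hG : Growth K E U)
    {c : PathSpace K → ℝ} (hc : memB K c) : PB K E U A c ≠ ⊥ := by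
  obtain ⟨𝒦, f, hcomp, hfE, hfnn, hdom, hV⟩ := hG
  obtain ⟨-, M₀, hM₀⟩ := hc
  set M := max M₀ 1 with hMdef
  have hM1 : (1:ℝ) ≤ M := le_max_right _ _
  have hMpos : (0:ℝ) < M := lt_of_lt_of_le one_pos hM1
  have hMbd : ∀ x, |c x| ≤ M * (1 + wt K x) := fun x =>
    (hM₀ x).trans (mul_le_mul_of_nonneg_right (le_max_left _ _) (aux_one_add_wt_pos x).le)
  obtain ⟨n, hn⟩ := ((hV M hMpos).eventually_lt_const (by norm_num : (0:EReal) < 1)).exists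
  have hUbot : U (fun t x => -(M * f n t x)) ≠ ⊥ := by
    intro h
    rw [h] at hn
    simp at hn
  have hbd : ∀ t : Fin (T + 1), ∃ R : ℝ, 0 ≤ R ∧ ∀ v ∈ 𝒦 n t, ∀ j, |v j| ≤ R := by
    intro t
    obtain ⟨R, hR⟩ := (hcomp n t).isBounded.exists_norm_le
    refine ⟨max R 0, le_max_right _ _, fun v hv j => ?_⟩
    calc |v j| = ‖v j‖ := (Real.norm_eq_abs _).symm
      _ ≤ ‖v‖ := norm_le_pi_norm v j
      _ ≤ R := hR v hv
      _ ≤ max R 0 := le_max_left _ _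
  choose R hR0 hRbd using hbd
  set C : ℝ := 1 + ∑ t, (d : ℝ) * R t with hCdef
  have hRsum : (0:ℝ) ≤ ∑ t, (d : ℝ) * R t :=
    Finset.sum_nonneg fun t _ => mul_nonneg (Nat.cast_nonneg d) (hR0 t)
  have hCbd : ∀ x : PathSpace K, 1 + wt K x ≤ (∑ t, f n t x) + C := by
    intro x
    have hf0 : (0:ℝ) ≤ ∑ t, f n t x := Finset.sum_nonneg fun t _ => hfnn n t x
    by_cases hx : ∀ t, (fun j => x.1 t j) ∈ 𝒦 n t
    · have hwt : wt K x ≤ ∑ t, (d : ℝ) * R t := by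
        refine Finset.sum_le_sum fun t _ => ?_
        calc (∑ j, |x.1 t j|) ≤ ∑ _j : Fin d, R t :=
              Finset.sum_le_sum fun j _ => hRbd t _ (hx t) j
          _ = d * R t := by
              simp [Finset.sum_const, Finset.card_univ, nsmul_eq_mul]
      rw [hCdef]; linarith
    · have := hdom n x hx
      rw [hCdef]; linarith
  have hT1 : ((T : ℝ) + 1) ≠ 0 := by positivity
  set κ : ℝ := M * C / (T + 1) with hκdef
  set φ : Fin (T + 1) → PathSpace K → ℝ := fun t x => (-M) * f n t x + (-κ) with hφdef
  have hκsum : (∑ _t : Fin (T + 1), κ : ℝ) = M * C := by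
    simp only [Finset.sum_const, Finset.card_univ, Fintype.card_fin, nsmul_eq_mul, hκdef]
    push_cast
    field_simp
  have hfun : (fun t x => φ t x + κ) = fun t (x : PathSpace K) => -(M * f n t x) := by
    funext t x
    rw [hφdef]
    ring
  have h1 : U (fun t x => -(M * f n t x)) - ((M * C : ℝ) : EReal) ≤ SU K U φ := by
    unfold SU
    refine le_trans (le_of_eq ?_) (le_iSup _ (fun _ => κ))
    rw [show (fun t x => φ t x + (fun _ : Fin (T + 1) => κ) t) = fun t x => φ t x + κ from rfl,
      hfun, hκsum]
  have hSUφ : SU K U φ ≠ ⊥ := by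
    intro h
    exact (aux_sub_coe_ne_bot hUbot (M * C)) (le_bot_iff.1 (h ▸ h1))
  have hmemφ : memE K E φ := fun t =>
    hS.E_add t _ (hS.E_smul t (-M) _ (hfE n t)) _ (hS.E_const t (-κ))
  have hineq : ∀ x, (((∑ t, φ t x) + (fun _ : PathSpace K => (0:ℝ)) x : ℝ) : EReal)
      ≤ ((c x : ℝ) : EReal) := by
    intro x
    refine EReal.coe_le_coe_iff.2 ?_
    have hsumφ : (∑ t, φ t x : ℝ) = (-M) * (∑ t, f n t x) + (-(M * C)) := by
      simp only [hφdef]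
      rw [Finset.sum_add_distrib, ← Finset.mul_sum]
      congr 1
      rw [Finset.sum_const, Finset.card_univ, Fintype.card_fin, nsmul_eq_mul, hκdef]
      push_cast
      field_simp
    have hcb : -(c x) ≤ M * ((∑ t, f n t x) + C) :=
      le_trans (neg_le_abs _) ((hMbd x).trans (mul_le_mul_of_nonneg_left (hCbd x) hMpos.le))
    show (∑ t, φ t x) + 0 ≤ c x
    rw [hsumφ]
    nlinarith [hcb]
  have hz : -(fun _ : PathSpace K => (0:ℝ)) ∈ A := by
    rw [show -(fun _ : PathSpace K => (0:ℝ)) = (fun _ : PathSpace K => (0:ℝ)) by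
      funext x; simp]
    exact hS.A_zero
  have hP := aux_le_P E U A (c := fun x => ((c x : ℝ) : EReal)) hz ⟨hmemφ, hSUφ, hineq⟩
  intro hbot
  rw [PB] at hbot
  rw [hbot] at hP
  exact hSUφ (le_bot_iff.1 hP)

lemma aux_PB_ne_top (hS : IsSetting K E U A) (hG : Growth K E U)
    {chat : PathSpace K → ℝ} (hchat : memB K chat) (hfin : PB K E U A chat ≠ ⊤)
    {c : PathSpace K → ℝ} (hc : memB K c) : PB K E U A c ≠ ⊤ := by
  intro htop
  have hc₂ : memB K (fun x => 2 * chat x + (-1) * c x + 0 * (1 + wt K x)) :=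
    aux_memB_comb hchat hc 2 (-1) 0
  have hb := aux_PB_ne_bot hS hG hc₂
  have hconc := aux_PB_concave hS c (fun x => 2 * chat x + (-1) * c x + 0 * (1 + wt K x))
    (a := (1/2 : ℝ)) (by norm_num) (by norm_num)
  have hmid : PB K E U A (fun x => (1/2 : ℝ) * c x +
      (1 - 1/2 : ℝ) * (2 * chat x + (-1) * c x + 0 * (1 + wt K x))) = PB K E U A chat :=
    aux_PB_congr fun x => by ring
  rw [hmid, htop] at hconc
  rw [EReal.coe_mul_top_of_pos (by norm_num)] at hconc
  have hnb : ((1 - 1/2 : ℝ) : EReal) *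
      PB K E U A (fun x => 2 * chat x + (-1) * c x + 0 * (1 + wt K x)) ≠ ⊥ :=
    aux_mul_ne_bot (by norm_num) hb
  rw [EReal.top_add_of_ne_bot hnb] at hconc
  exact hfin (top_le_iff.1 hconc)

end AuxFin
set_option maxHeartbeats 2000000

/-- Theorem `mainEMOTtheoremgeneral` (i): if `P(ĉ) < +∞` for some
`ĉ ∈ B_{0:T}`, then `P` is real valued, norm continuous, cash additive, concave and
nondecreasing on `B_{0:T}`. -/
theorem P_finite_continuous_cashAdditive_concave_monotone
    {T d : ℕ} (hT : 1 ≤ T) (hd : 1 ≤ d)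
    (K : Fin (T + 1) → Fin d → Set ℝ)
    (E : Fin (T + 1) → Set (PathSpace K → ℝ))
    (U : (Fin (T + 1) → PathSpace K → ℝ) → EReal)
    (A : Set (PathSpace K → ℝ))
    (hS : IsSetting K E U A) (hG : Growth K E U)
    (chat : PathSpace K → ℝ) (hchat : memB K chat)
    (hfin : PB K E U A chat ≠ ⊤) :
    (∀ c, memB K c → PB K E U A c ≠ ⊥ ∧ PB K E U A c ≠ ⊤) ∧
    (∀ c, memB K c → ∀ ε : ℝ, 0 < ε → ∃ δ : ℝ, 0 < δ ∧ ∀ c', memB K c' →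
      wnorm K (c' - c) < δ →
        |(PB K E U A c').toReal - (PB K E U A c).toReal| < ε) ∧
    (∀ c, memB K c → ∀ k : ℝ,
      PB K E U A (fun x => c x + k) = PB K E U A c + (k : EReal)) ∧
    (∀ c₁ c₂, memB K c₁ → memB K c₂ → ∀ a : ℝ, 0 ≤ a → a ≤ 1 →
      (a : EReal) * PB K E U A c₁ + ((1 - a : ℝ) : EReal) * PB K E U A c₂ ≤
        PB K E U A (fun x => a * c₁ x + (1 - a) * c₂ x)) ∧
    (∀ c₁ c₂, memB K c₁ → memB K c₂ → (∀ x, c₁ x ≤ c₂ x) →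
      PB K E U A c₁ ≤ PB K E U A c₂) := by
  obtain ⟨hS', hG', hchat', hfin'⟩ : True ∧ True ∧ True ∧ True := ⟨trivial, trivial, trivial, trivial⟩
  clear hS' hG' hchat' hfin'
  refine ⟨fun c hc => ⟨aux_PB_ne_bot hS hG hc, aux_PB_ne_top hS hG hchat hfin hc⟩, ?_, ?_, ?_, ?_⟩
  · -- norm continuity
    intro c hc ε hε
    have hfinB : ∀ c' : PathSpace K → ℝ, memB K c' →
        PB K E U A c' ≠ ⊥ ∧ PB K E U A c' ≠ ⊤ := fun c' hc' =>
      ⟨aux_PB_ne_bot hS hG hc', aux_PB_ne_top hS hG hchat hfin hc'⟩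
    have hmem : ∀ r : ℝ, memB K (fun x => c x + r * (1 + wt K x)) := fun r =>
      aux_memB_congr (fun x => by ring) (aux_memB_comb hc hc 1 0 r)
    set p : ℝ := (PB K E U A c).toReal with hp
    set l : ℝ := (PB K E U A (fun x => c x + (-1) * (1 + wt K x))).toReal with hl
    have hfc := hfinB c hc
    have hfl := hfinB _ (hmem (-1))
    have hlp : l ≤ p := by
      refine EReal.toReal_le_toReal (aux_PB_mono E U A fun x => ?_) hfl.1 hfc.2
      have := aux_one_add_wt_pos x
      nlinarith
    set δ : ℝ := min (1/2) (ε / (2 * (p - l) + 1)) with hδdef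
    have hpl0 : (0:ℝ) ≤ p - l := by linarith
    have hδpos : 0 < δ := lt_min (by norm_num) (div_pos hε (by linarith))
    refine ⟨δ, hδpos, fun c' hc' hlt => ?_⟩
    have hδhalf : δ ≤ 1/2 := min_le_left _ _
    have hδε : δ ≤ ε / (2 * (p - l) + 1) := min_le_right _ _
    have hkey : δ * (2 * (p - l) + 1) ≤ ε := (le_div_iff₀ (by linarith)).1 hδε
    have hsub : memB K (c' - c) :=
      aux_memB_congr (fun x => by simp [Pi.sub_apply]; ring) (aux_memB_comb hc' hc 1 (-1) 0)
    have habs : ∀ x, |c' x - c x| ≤ δ * (1 + wt K x) := fun x => by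
      have := aux_abs_le_of_wnorm_lt hsub hlt x
      simpa [Pi.sub_apply] using this
    have hfc' := hfinB c' hc'
    have hfδ := hfinB _ (hmem δ)
    have hfδ1 := hfinB _ (hmem (δ - 1))
    have hfmδ := hfinB _ (hmem (-δ))
    set r' : ℝ := (PB K E U A c').toReal with hr'
    set pδ : ℝ := (PB K E U A (fun x => c x + δ * (1 + wt K x))).toReal with hpδ
    set q : ℝ := (PB K E U A (fun x => c x + (δ - 1) * (1 + wt K x))).toReal with hq
    set pmδ : ℝ := (PB K E U A (fun x => c x + (-δ) * (1 + wt K x))).toReal with hpmδ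
    have hm1 : r' ≤ pδ := by
      refine EReal.toReal_le_toReal (aux_PB_mono E U A fun x => ?_) hfc'.1 hfδ.2
      have h := abs_le.1 (habs x)
      linarith [h.2]
    have hql : l ≤ q := by
      refine EReal.toReal_le_toReal (aux_PB_mono E U A fun x => ?_) hfl.1 hfδ1.2
      have := aux_one_add_wt_pos x
      nlinarith
    have hconc1 := aux_PB_concave hS (fun x => c x + δ * (1 + wt K x))
        (fun x => c x + (δ - 1) * (1 + wt K x)) (a := 1 - δ) (by linarith) (by linarith)
    have hmid1 : PB K E U A (fun x => (1 - δ) * (c x + δ * (1 + wt K x)) +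
        (1 - (1 - δ)) * (c x + (δ - 1) * (1 + wt K x))) = PB K E U A c :=
      aux_PB_congr fun x => by ring
    rw [hmid1] at hconc1
    have hr1 : (1 - δ) * pδ + (1 - (1 - δ)) * q ≤ p :=
      aux_concave_real hfδ.1 hfδ.2 hfδ1.1 hfδ1.2 hfc.1 hfc.2 hconc1
    have hconc2 := aux_PB_concave hS c (fun x => c x + (-1) * (1 + wt K x))
        (a := 1 - δ) (by linarith) (by linarith)
    have hmid2 : PB K E U A (fun x => (1 - δ) * c x +
        (1 - (1 - δ)) * (c x + (-1) * (1 + wt K x)))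
        = PB K E U A (fun x => c x + (-δ) * (1 + wt K x)) := aux_PB_congr fun x => by ring
    rw [hmid2] at hconc2
    have hr2 : (1 - δ) * p + (1 - (1 - δ)) * l ≤ pmδ :=
      aux_concave_real hfc.1 hfc.2 hfl.1 hfl.2 hfmδ.1 hfmδ.2 hconc2
    have hm2 : pmδ ≤ r' := by
      refine EReal.toReal_le_toReal (aux_PB_mono E U A fun x => ?_) hfmδ.1 hfc'.2
      have h := abs_le.1 (habs x)
      linarith [h.1]
    rw [abs_lt]
    constructor
    · -- -ε < r' - p
      have h1 : p - r' ≤ δ * p - δ * l := by nlinarith [hr2, hm2]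
      have h2 : (0:ℝ) ≤ δ * p - δ * l := by nlinarith [mul_nonneg hδpos.le hpl0]
      nlinarith [hkey]
    · -- r' - p < ε
      rcases le_or_gt r' p with hle | hgt
      · linarith
      · have e0 : (1 - δ) * r' ≤ (1 - δ) * pδ :=
          mul_le_mul_of_nonneg_left hm1 (by linarith)
        have e1 : (1 - δ) * (r' - p) ≤ δ * p - δ * l := by nlinarith [hr1, hql, e0]
        have e2 : (1/2 : ℝ) * (r' - p) ≤ (1 - δ) * (r' - p) :=
          mul_le_mul_of_nonneg_right (by linarith) (by linarith)
        nlinarith [hkey]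
  · -- cash additivity
    intro c hc k
    exact aux_PB_cash hS c k
  · -- concavity
    intro c₁ c₂ h₁ h₂ a ha0 ha1
    rcases eq_or_lt_of_le ha0 with h0 | h0
    · have ha : a = 0 := h0.symm
      subst ha
      have hmid : PB K E U A (fun x => 0 * c₁ x + (1 - 0) * c₂ x) = PB K E U A c₂ :=
        aux_PB_congr fun x => by ring
      rw [hmid]
      norm_num
    rcases eq_or_lt_of_le ha1 with h1 | h1
    · have ha : a = 1 := h1
      subst ha
      have hmid : PB K E U A (fun x => 1 * c₁ x + (1 - 1) * c₂ x) = PB K E U A c₁ :=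
        aux_PB_congr fun x => by ring
      rw [hmid]
      norm_num
    · exact aux_PB_concave hS c₁ c₂ h0 h1
  · -- monotone
    intro c₁ c₂ h₁ h₂ h
    exact aux_PB_mono E U A h

end EMOT
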